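/- arXiv:2404.04737 — 2 statements merged into one kernel-verified Lean document; each statement's English description precedes it below -/
import Mathlib

section
/- For every real z ≥ 1 one has 0 < K₁(z)/K₀(z) − 1 − 1/(2z) + 1/(8z²) ≤ 1/(8z³). -/
/-!
Write `T f z = ∫₀^∞ exp (-z cosh t) f (cosh t) dt` (`coshLaplace f z`), so that `K₀ = T 1` and
`K₁ = T id`. Integrating `d/dt [exp (-z cosh t) sinh t g (cosh t)]` over `(0, ∞)` gives
`T (c g + (c² - 1) g' - z (c² - 1) g) = 0` whenever `c g (c)` is bounded on `[1, ∞)`.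
For `g = 4/(c+1)² - 8z/(c+1)` this reads `8z² K₁ = (8z² + 4z - 1) K₀ + T w` with
`w = (c-1)(c+7)/(c+1)²`, so the quantity in the statement equals `T w / (8z² K₀)`, which is positive
because `w > 0` on `(1, ∞)`. For `g = (c+7)/(c+1)³` it reads `z T w = T ((20 - 11c - c²)/(c+1)³)`,
and the last integrand is at most `1` on `[1, ∞)`, so `z T w ≤ K₀`: this is the upper bound.
-/

open Real MeasureTheory

noncomputable section

/-- Modified Bessel function of the second kind, order 0. -/
def K0 (x : ℝ) : ℝ := ∫ t in Set.Ioi (0:ℝ), Real.exp (-x * Real.cosh t)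

/-- Modified Bessel function of the second kind, order 1. -/
def K1 (x : ℝ) : ℝ := ∫ t in Set.Ioi (0:ℝ), Real.exp (-x * Real.cosh t) * Real.cosh t

open Set Filter Topology

def coshLaplace (f : ℝ → ℝ) (z : ℝ) : ℝ := ∫ t in Ioi 0, exp (-z * cosh t) * f (cosh t)

def CoshLaplaceIntegrable (f : ℝ → ℝ) (z : ℝ) : Prop :=
  IntegrableOn (fun t => exp (-z * cosh t) * f (cosh t)) (Ioi 0)

lemma K0_eq_coshLaplace (z : ℝ) : K0 z = coshLaplace 1 z := by
  simp [K0, coshLaplace]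

lemma K1_eq_coshLaplace (z : ℝ) : K1 z = coshLaplace id z := rfl

lemma half_le_cosh (t : ℝ) : t / 2 ≤ cosh t := by
  have := add_one_le_exp t
  rw [← cosh_add_sinh] at this
  linarith [sinh_lt_cosh t]

lemma cosh_mul_exp_neg_mul_cosh_le {z : ℝ} (hz : 0 < z) (t : ℝ) :
    cosh t * exp (-z * cosh t) ≤ 2 / z * exp (-(z / 4) * t) := by
  have hexp : z * cosh t / 2 + 1 ≤ exp (z * cosh t / 2) := add_one_le_exp _
  calc cosh t * exp (-z * cosh t)
      ≤ 2 / z * exp (z * cosh t / 2) * exp (-z * cosh t) := by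
        gcongr
        rw [div_mul_eq_mul_div, le_div_iff₀ hz]
        nlinarith [one_le_cosh t]
    _ = 2 / z * exp (-z * cosh t / 2) := by
        rw [mul_assoc, ← exp_add]; ring_nf
    _ ≤ 2 / z * exp (-(z / 4) * t) := by
        gcongr
        nlinarith [half_le_cosh t]

lemma tendsto_exp_neg_mul_cosh_atTop {z : ℝ} (hz : 0 < z) :
    Tendsto (fun t => exp (-z * cosh t)) atTop (𝓝 0) := by
  refine tendsto_exp_atBot.comp (tendsto_atBot_mono (fun t => ?_)
    ((tendsto_id.atTop_div_const two_pos).const_mul_atTop_of_neg (neg_neg_of_pos hz)))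
  have := half_le_cosh t
  simp only [id]
  nlinarith

section

variable {f g : ℝ → ℝ} {z : ℝ}

namespace CoshLaplaceIntegrable

lemma of_bound (hz : 0 < z) (hf : ContinuousOn f (Ici 1)) {M : ℝ}
    (hM : ∀ c, 1 ≤ c → |f c| ≤ M * c) : CoshLaplaceIntegrable f z := by
  have hM0 : 0 ≤ M := by simpa using (abs_nonneg _).trans (hM 1 le_rfl)
  refine Integrable.mono' ((exp_neg_integrableOn_Ioi 0 (by positivity : 0 < z / 4)).const_mul
    (M * (2 / z))) ((continuous_exp.comp (continuous_const.mul continuous_cosh)).mul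
      (hf.comp_continuous continuous_cosh one_le_cosh)).aestronglyMeasurable
    (ae_of_all _ fun t => ?_)
  rw [norm_mul, norm_of_nonneg (exp_pos _).le, Real.norm_eq_abs]
  calc exp (-z * cosh t) * |f (cosh t)| ≤ exp (-z * cosh t) * (M * cosh t) := by
        gcongr; exact hM _ (one_le_cosh t)
    _ = M * (cosh t * exp (-z * cosh t)) := by ring
    _ ≤ M * (2 / z * exp (-(z / 4) * t)) :=
        mul_le_mul_of_nonneg_left (cosh_mul_exp_neg_mul_cosh_le hz t) hM0
    _ = M * (2 / z) * exp (-(z / 4) * t) := by ring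

lemma sub (hf : CoshLaplaceIntegrable f z) (hg : CoshLaplaceIntegrable g z) :
    CoshLaplaceIntegrable (f - g) z := by
  unfold CoshLaplaceIntegrable at *
  simp only [Pi.sub_apply, mul_sub]
  exact Integrable.sub hf hg

lemma smul (a : ℝ) (hf : CoshLaplaceIntegrable f z) : CoshLaplaceIntegrable (a • f) z := by
  unfold CoshLaplaceIntegrable at *
  simp only [Pi.smul_apply, smul_eq_mul, mul_left_comm _ a]
  exact Integrable.const_mul hf a

end CoshLaplaceIntegrable

lemma coshLaplace_sub (hf : CoshLaplaceIntegrable f z) (hg : CoshLaplaceIntegrable g z) :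
    coshLaplace (f - g) z = coshLaplace f z - coshLaplace g z := by
  simp only [coshLaplace, Pi.sub_apply, mul_sub]
  exact integral_sub hf hg

lemma coshLaplace_smul (a : ℝ) : coshLaplace (a • f) z = a * coshLaplace f z := by
  simp only [coshLaplace, Pi.smul_apply, smul_eq_mul, mul_left_comm _ a]
  exact integral_const_mul a _

lemma coshLaplace_mono (hf : CoshLaplaceIntegrable f z) (hg : CoshLaplaceIntegrable g z)
    (hfg : ∀ c, 1 ≤ c → f c ≤ g c) : coshLaplace f z ≤ coshLaplace g z :=
  setIntegral_mono_on hf hg measurableSet_Ioi fun t _ => by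
    gcongr; exact hfg _ (one_le_cosh t)

lemma coshLaplace_pos (hf : CoshLaplaceIntegrable f z) (hf0 : ∀ c, 1 ≤ c → 0 ≤ f c)
    (hf1 : ∀ c, 1 < c → 0 < f c) : 0 < coshLaplace f z := by
  have hpos : ∀ t ∈ Ioi (0 : ℝ), 0 < exp (-z * cosh t) * f (cosh t) := fun t ht =>
    mul_pos (exp_pos _) (hf1 _ (one_lt_cosh.2 (ne_of_gt ht)))
  rw [coshLaplace, setIntegral_pos_iff_support_of_nonneg_ae
    (ae_of_all _ fun t => mul_nonneg (exp_pos _).le (hf0 _ (one_le_cosh t))) hf]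
  calc (0 : ENNReal) < volume (Ioi (0 : ℝ)) := by simp
    _ ≤ _ := measure_mono fun t ht => mem_inter (hpos t ht).ne' ht

lemma coshLaplace_eq_zero_of_hasDerivAt (hz : 0 < z) {g' h : ℝ → ℝ} {C : ℝ}
    (hg : ∀ c, 1 ≤ c → HasDerivAt g (g' c) c) (hC : ∀ c, 1 ≤ c → |c * g c| ≤ C)
    (hh : ∀ c, 1 ≤ c → h c = c * g c + (c ^ 2 - 1) * g' c - z * (c ^ 2 - 1) * g c)
    (hint : CoshLaplaceIntegrable h z) : coshLaplace h z = 0 := by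
  set Φ : ℝ → ℝ := fun t => exp (-z * cosh t) * (sinh t * g (cosh t))
  have hΦ : ∀ t, HasDerivAt Φ (exp (-z * cosh t) * h (cosh t)) t := fun t => by
    have := ((hasDerivAt_cosh t).const_mul (-z)).exp.mul
      ((hasDerivAt_sinh t).mul ((hg _ (one_le_cosh t)).comp t (hasDerivAt_cosh t)))
    refine this.congr_deriv ?_
    simp only [Pi.mul_apply, Function.comp_apply]
    rw [hh _ (one_le_cosh t), ← sinh_sq]
    ring
  have hbdd : ∀ t, |sinh t * g (cosh t)| ≤ C := fun t => by
    rw [abs_mul]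
    calc |sinh t| * |g (cosh t)| ≤ cosh t * |g (cosh t)| := by
          gcongr
          rw [abs_sinh, ← cosh_abs t]
          exact (sinh_lt_cosh _).le
      _ ≤ C := by
          simpa [abs_mul, abs_of_pos (cosh_pos t)] using hC _ (one_le_cosh t)
  have hlim : Tendsto Φ atTop (𝓝 0) := by
    refine squeeze_zero_norm (a := fun t => exp (-z * cosh t) * C) (fun t => ?_)
      (by simpa only [zero_mul] using (tendsto_exp_neg_mul_cosh_atTop hz).mul_const C)
    rw [norm_mul, norm_of_nonneg (exp_pos _).le, Real.norm_eq_abs]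
    exact mul_le_mul_of_nonneg_left (hbdd t) (exp_pos _).le
  have := integral_Ioi_of_hasDerivAt_of_tendsto' (fun t _ => hΦ t) hint hlim
  simpa [Φ, coshLaplace] using this

end

section

variable {z : ℝ}

lemma coshLaplaceIntegrable_one (hz : 0 < z) : CoshLaplaceIntegrable 1 z :=
  .of_bound hz continuousOn_const (M := 1) fun c hc => by simpa using hc

lemma coshLaplaceIntegrable_id (hz : 0 < z) : CoshLaplaceIntegrable id z :=
  .of_bound hz continuousOn_id (M := 1) fun c hc => by
    rw [id, one_mul, abs_of_pos (by linarith)]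

lemma coshLaplaceIntegrable_weight (hz : 0 < z) :
    CoshLaplaceIntegrable (fun c => (c - 1) * (c + 7) / (c + 1) ^ 2) z := by
  refine .of_bound hz (ContinuousOn.div (by fun_prop) (by fun_prop)
    fun c (hc : 1 ≤ c) => by positivity) (M := 1) fun c hc => ?_
  rw [abs_div, abs_of_pos (by positivity : (0 : ℝ) < (c + 1) ^ 2), div_le_iff₀ (by positivity),
    abs_of_nonneg (by nlinarith)]
  nlinarith [mul_nonneg (sq_nonneg (c - 1)) (by linarith : (0 : ℝ) ≤ c + 3)]

lemma coshLaplaceIntegrable_weight' (hz : 0 < z) :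
    CoshLaplaceIntegrable (fun c => (20 - 11 * c - c ^ 2) / (c + 1) ^ 3) z := by
  refine .of_bound hz (ContinuousOn.div (by fun_prop) (by fun_prop)
    fun c (hc : 1 ≤ c) => by positivity) (M := 1) fun c hc => ?_
  rw [abs_div, abs_of_pos (by positivity : (0 : ℝ) < (c + 1) ^ 3), div_le_iff₀ (by positivity),
    abs_le]
  constructor <;> nlinarith [mul_nonneg (sub_nonneg.2 hc) (sub_nonneg.2 hc)]

lemma K0_pos (hz : 0 < z) : 0 < K0 z := by
  rw [K0_eq_coshLaplace]
  exact coshLaplace_pos (coshLaplaceIntegrable_one hz) (fun _ _ => zero_le_one) fun _ _ => one_pos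

lemma coshLaplace_weight_pos (hz : 0 < z) :
    0 < coshLaplace (fun c => (c - 1) * (c + 7) / (c + 1) ^ 2) z := by
  refine coshLaplace_pos (coshLaplaceIntegrable_weight hz) (fun c hc => ?_) fun c hc => ?_
  · have : 0 ≤ (c - 1) * (c + 7) := by nlinarith
    positivity
  · have : 0 < (c - 1) * (c + 7) := by nlinarith
    positivity

lemma coshLaplace_weight'_le_K0 (hz : 0 < z) :
    coshLaplace (fun c => (20 - 11 * c - c ^ 2) / (c + 1) ^ 3) z ≤ K0 z := by
  rw [K0_eq_coshLaplace]
  refine coshLaplace_mono (coshLaplaceIntegrable_weight' hz) (coshLaplaceIntegrable_one hz)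
    fun c hc => ?_
  rw [Pi.one_apply, div_le_one (by positivity)]
  nlinarith

lemma eight_mul_sq_mul_coshLaplace_id (hz : 0 < z) :
    8 * z ^ 2 * coshLaplace id z = (8 * z ^ 2 + 4 * z - 1) * coshLaplace 1 z +
      coshLaplace (fun c => (c - 1) * (c + 7) / (c + 1) ^ 2) z := by
  have hg : ∀ c : ℝ, 1 ≤ c → HasDerivAt (fun c => 4 / (c + 1) ^ 2 - 8 * z / (c + 1))
      (-8 / (c + 1) ^ 3 + 8 * z / (c + 1) ^ 2) c := fun c hc => by
    have h1 : HasDerivAt (fun c => c + 1) 1 c := (hasDerivAt_id c).add_const 1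
    have hc1 : c + 1 ≠ 0 := by positivity
    refine (((hasDerivAt_const c 4).div (h1.pow 2) (pow_ne_zero 2 hc1)).sub
      ((hasDerivAt_const c (8 * z)).div h1 hc1)).congr_deriv ?_
    simp only [Pi.pow_apply]
    field_simp
    ring
  have hbdd : ∀ c : ℝ, 1 ≤ c → |c * (4 / (c + 1) ^ 2 - 8 * z / (c + 1))| ≤ 4 + 8 * z :=
    fun c hc => by
      have ha : c * (4 / (c + 1) ^ 2) ≤ 4 := by
        rw [mul_div_assoc', div_le_iff₀ (by positivity)]; nlinarith
      have hb : c * (8 * z / (c + 1)) ≤ 8 * z := by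
        rw [mul_div_assoc', div_le_iff₀ (by positivity)]; nlinarith
      have ha0 : 0 ≤ c * (4 / (c + 1) ^ 2) := by positivity
      have hb0 : 0 ≤ c * (8 * z / (c + 1)) := by positivity
      rw [mul_sub, abs_le]
      constructor <;> linarith
  have hlin := ((coshLaplaceIntegrable_id hz).smul (8 * z ^ 2)).sub
    ((coshLaplaceIntegrable_one hz).smul (8 * z ^ 2 + 4 * z - 1))
  have h0 := coshLaplace_eq_zero_of_hasDerivAt hz hg hbdd (fun c hc => by
      simp only [Pi.sub_apply, Pi.smul_apply, Pi.one_apply, id, smul_eq_mul]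
      have hc1 : c + 1 ≠ 0 := by positivity
      field_simp
      ring)
    (hlin.sub (coshLaplaceIntegrable_weight hz))
  rw [coshLaplace_sub hlin (coshLaplaceIntegrable_weight hz), coshLaplace_sub
    ((coshLaplaceIntegrable_id hz).smul _) ((coshLaplaceIntegrable_one hz).smul _),
    coshLaplace_smul, coshLaplace_smul] at h0
  linarith

lemma mul_coshLaplace_weight (hz : 0 < z) :
    z * coshLaplace (fun c => (c - 1) * (c + 7) / (c + 1) ^ 2) z =
      coshLaplace (fun c => (20 - 11 * c - c ^ 2) / (c + 1) ^ 3) z := by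
  have hg : ∀ c : ℝ, 1 ≤ c → HasDerivAt (fun c => (c + 7) / (c + 1) ^ 3)
      (-(2 * c + 20) / (c + 1) ^ 4) c := fun c hc => by
    have hc1 : c + 1 ≠ 0 := by positivity
    refine (((hasDerivAt_id c).add_const 7).div (((hasDerivAt_id c).add_const 1).pow 3)
      (pow_ne_zero 3 hc1)).congr_deriv ?_
    simp only [Pi.pow_apply, id]
    field_simp
    ring
  have hbdd : ∀ c : ℝ, 1 ≤ c → |c * ((c + 7) / (c + 1) ^ 3)| ≤ 1 := fun c hc => by
    rw [mul_div_assoc', abs_of_nonneg (by positivity), div_le_one (by positivity)]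
    nlinarith [mul_nonneg (sub_nonneg.2 hc) (sub_nonneg.2 hc)]
  have h0 := coshLaplace_eq_zero_of_hasDerivAt hz hg hbdd (fun c hc => by
      simp only [Pi.sub_apply, Pi.smul_apply, smul_eq_mul]
      have hc1 : c + 1 ≠ 0 := by positivity
      field_simp
      ring)
    ((coshLaplaceIntegrable_weight' hz).sub ((coshLaplaceIntegrable_weight hz).smul z))
  rw [coshLaplace_sub (coshLaplaceIntegrable_weight' hz)
    ((coshLaplaceIntegrable_weight hz).smul z), coshLaplace_smul] at h0
  linarith

lemma K1_div_K0_sub_eq (hz : 0 < z) :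
    K1 z / K0 z - 1 - 1 / (2 * z) + 1 / (8 * z ^ 2) =
      coshLaplace (fun c => (c - 1) * (c + 7) / (c + 1) ^ 2) z / (8 * z ^ 2 * K0 z) := by
  have hK0 := K0_pos hz
  rw [K0_eq_coshLaplace] at hK0 ⊢
  rw [K1_eq_coshLaplace]
  field_simp
  linear_combination 2 * eight_mul_sq_mul_coshLaplace_id hz

end

theorem stmt0 (z : ℝ) (hz : 1 ≤ z) :
    0 < K1 z / K0 z - 1 - 1 / (2 * z) + 1 / (8 * z ^ 2) ∧
      K1 z / K0 z - 1 - 1 / (2 * z) + 1 / (8 * z ^ 2) ≤ 1 / (8 * z ^ 3) := by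
  have hz0 : 0 < z := by linarith
  have hK0 := K0_pos hz0
  have hw := coshLaplace_weight_pos hz0
  rw [K1_div_K0_sub_eq hz0]
  refine ⟨by positivity, ?_⟩
  have hzw : z * coshLaplace (fun c => (c - 1) * (c + 7) / (c + 1) ^ 2) z ≤ K0 z :=
    (mul_coshLaplace_weight hz0).trans_le (coshLaplace_weight'_le_K0 hz0)
  rw [div_le_div_iff₀ (by positivity) (by positivity)]
  nlinarith
end
end

section
/- There exist δ ∈ (0, 1/4) and c < 2 such that: (i) for all z ∈ (0, δ], |I₁(z)/I₀(z) − z/2| ≤ z²/8 and |I₀(z)/I₁(z) − 2/z − z/4| ≤ z²/8; and (ii) for all z ≥ δ, 1/z ≤ I₀(z)/I₁(z) − I₁(z)/I₀(z) ≤ c/z. -/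
/-!
Part (i) comes from the expansions `I₀(z) = 1 + z²/4 + O(z⁴)` and `I₁(z) = z/2 + z³/16 + O(z⁴)`,
obtained by integrating the cubic Taylor polynomial of `exp` against `1` and `cos t`.

For part (ii), `I₀' = I₁` and `I₁' = I₀ - I₁/z`, so `r = I₁/I₀` solves the Riccati equation
`r' = 1 - r/z - r²`. Since `x ↦ 1/x - x` is decreasing, `c/z ≤ 1/r - r` (resp. `≥`) says that `r`
lies below (resp. above) the positive root `ψ_c(z)` of `z x² + c x - z`. Now `ψ_1` is a strict
supersolution of the Riccati equation and, for `c = 399/200` and `z ≥ 1/5`, `ψ_c` is a strict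
subsolution; once `ψ_c ≤ r ≤ ψ_1` is checked numerically at `z = 1/5`, a first-crossing argument
keeps it on `[1/5, ∞)`.
-/

open Real MeasureTheory

noncomputable section

/-- Modified Bessel function of the first kind, order 0. -/
def I0 (x : ℝ) : ℝ := (1 / π) * ∫ t in (0:ℝ)..π, Real.exp (x * Real.cos t)

/-- Modified Bessel function of the first kind, order 1. -/
def I1 (x : ℝ) : ℝ := (1 / π) * ∫ t in (0:ℝ)..π, Real.exp (x * Real.cos t) * Real.cos t

theorem integral_cos_pow_four_zero_pi : ∫ t in (0:ℝ)..π, cos t ^ 4 = 3 * π / 8 := by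
  rw [integral_cos_pow]; norm_num [integral_cos_sq]; ring

theorem integral_quartic_cos (a b c d e : ℝ) :
    ∫ t in (0:ℝ)..π, (a + b * cos t + c * cos t ^ 2 + d * cos t ^ 3 + e * cos t ^ 4) =
      π * (a + c / 2 + 3 * e / 8) := by
  have hi : ∀ f : ℝ → ℝ, Continuous f → IntervalIntegrable f volume 0 π :=
    fun f hf => hf.intervalIntegrable _ _
  rw [intervalIntegral.integral_add (hi _ (by fun_prop)) (hi _ (by fun_prop)),
    intervalIntegral.integral_add (hi _ (by fun_prop)) (hi _ (by fun_prop)),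
    intervalIntegral.integral_add (hi _ (by fun_prop)) (hi _ (by fun_prop)),
    intervalIntegral.integral_add (hi _ (by fun_prop)) (hi _ (by fun_prop))]
  simp only [intervalIntegral.integral_const, intervalIntegral.integral_const_mul, integral_cos,
    integral_cos_sq, integral_cos_pow_three, integral_cos_pow_four_zero_pi, sin_pi, sin_zero,
    cos_pi, cos_zero, smul_eq_mul]
  ring

theorem abs_exp_sub_taylor_le {u : ℝ} (hu : |u| ≤ 1) :
    |exp u - (1 + u + u ^ 2 / 2 + u ^ 3 / 6)| ≤ 5 / 96 * u ^ 4 := by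
  have h := Real.exp_bound hu (n := 4) (by norm_num)
  simp only [Finset.sum_range_succ, Finset.sum_range_zero, Nat.factorial, pow_abs] at h
  rw [abs_of_nonneg (by positivity : (0:ℝ) ≤ u ^ 4)] at h
  norm_num at h
  linarith

theorem abs_integral_exp_sub_taylor_mul_le {z : ℝ} (hz : |z| ≤ 1) {w : ℝ → ℝ}
    (hw : ∀ t, |w t| ≤ 1) :
    |∫ t in (0:ℝ)..π,
        (exp (z * cos t) - (1 + z * cos t + (z * cos t) ^ 2 / 2 + (z * cos t) ^ 3 / 6)) * w t|
      ≤ 5 * π * z ^ 4 / 256 := by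
  have hpt : ∀ t, ‖(exp (z * cos t) -
      (1 + z * cos t + (z * cos t) ^ 2 / 2 + (z * cos t) ^ 3 / 6)) * w t‖
        ≤ 5 / 96 * z ^ 4 * cos t ^ 4 := fun t => by
    have hu : |z * cos t| ≤ 1 := by
      rw [abs_mul]; exact mul_le_one₀ hz (abs_nonneg _) (abs_cos_le_one t)
    rw [norm_mul, norm_eq_abs, norm_eq_abs]
    calc _ ≤ 5 / 96 * (z * cos t) ^ 4 * 1 :=
          mul_le_mul (abs_exp_sub_taylor_le hu) (hw t) (abs_nonneg _) (by positivity)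
      _ = _ := by ring
  calc _ ≤ |∫ t in (0:ℝ)..π, 5 / 96 * z ^ 4 * cos t ^ 4| :=
        intervalIntegral.norm_integral_le_abs_of_norm_le (.of_forall hpt)
          ((by fun_prop : Continuous fun t => 5 / 96 * z ^ 4 * cos t ^ 4).intervalIntegrable _ _)
    _ = _ := by
      rw [intervalIntegral.integral_const_mul, integral_cos_pow_four_zero_pi,
        abs_of_nonneg (by positivity)]
      ring

theorem integral_expTaylor_cos (z : ℝ) :
    ∫ t in (0:ℝ)..π, (1 + z * cos t + (z * cos t) ^ 2 / 2 + (z * cos t) ^ 3 / 6) =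
      π * (1 + z ^ 2 / 4) := by
  calc _ = ∫ t in (0:ℝ)..π,
        (1 + z * cos t + z ^ 2 / 2 * cos t ^ 2 + z ^ 3 / 6 * cos t ^ 3 + 0 * cos t ^ 4) := by
        congr 1; ext t; ring
    _ = _ := by rw [integral_quartic_cos]; ring

theorem integral_expTaylor_cos_mul_cos (z : ℝ) :
    ∫ t in (0:ℝ)..π, (1 + z * cos t + (z * cos t) ^ 2 / 2 + (z * cos t) ^ 3 / 6) * cos t =
      π * (z / 2 + z ^ 3 / 16) := by
  calc _ = ∫ t in (0:ℝ)..π,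
        (0 + 1 * cos t + z * cos t ^ 2 + z ^ 2 / 2 * cos t ^ 3 + z ^ 3 / 6 * cos t ^ 4) := by
        congr 1; ext t; ring
    _ = _ := by rw [integral_quartic_cos]; ring

theorem abs_I0_sub_le {z : ℝ} (hz : |z| ≤ 1) : |I0 z - (1 + z ^ 2 / 4)| ≤ 5 * z ^ 4 / 256 := by
  have h := abs_integral_exp_sub_taylor_mul_le hz (w := fun _ => 1) (by simp)
  simp only [mul_one] at h
  rw [intervalIntegral.integral_sub (Continuous.intervalIntegrable (by fun_prop) _ _)
    (Continuous.intervalIntegrable (by fun_prop) _ _), integral_expTaylor_cos] at h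
  have hI0 : I0 z - (1 + z ^ 2 / 4) =
      π⁻¹ * ((∫ t in (0:ℝ)..π, exp (z * cos t)) - π * (1 + z ^ 2 / 4)) := by
    rw [I0]; field_simp
  rw [hI0, abs_mul, abs_inv, abs_of_pos pi_pos, inv_mul_le_iff₀ pi_pos]
  linarith

theorem abs_I1_sub_le {z : ℝ} (hz : |z| ≤ 1) :
    |I1 z - (z / 2 + z ^ 3 / 16)| ≤ 5 * z ^ 4 / 256 := by
  have h := abs_integral_exp_sub_taylor_mul_le hz abs_cos_le_one
  simp only [sub_mul] at h
  rw [intervalIntegral.integral_sub (Continuous.intervalIntegrable (by fun_prop) _ _)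
    (Continuous.intervalIntegrable (by fun_prop) _ _), integral_expTaylor_cos_mul_cos] at h
  have hI1 : I1 z - (z / 2 + z ^ 3 / 16) =
      π⁻¹ * ((∫ t in (0:ℝ)..π, exp (z * cos t) * cos t) - π * (z / 2 + z ^ 3 / 16)) := by
    rw [I1]; field_simp
  rw [hI1, abs_mul, abs_inv, abs_of_pos pi_pos, inv_mul_le_iff₀ pi_pos]
  linarith

theorem one_le_I0 (x : ℝ) : 1 ≤ I0 x := by
  have hmono : ∫ t in (0:ℝ)..π, (1 + x * cos t) ≤ ∫ t in (0:ℝ)..π, exp (x * cos t) :=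
    intervalIntegral.integral_mono_on pi_pos.le (Continuous.intervalIntegrable (by fun_prop) _ _)
      (Continuous.intervalIntegrable (by fun_prop) _ _) fun t _ => by
        linarith [add_one_le_exp (x * cos t)]
  have hlin : ∫ t in (0:ℝ)..π, (1 + x * cos t) = π := by simp
  rw [I0, one_div, le_inv_mul_iff₀ pi_pos]
  linarith

theorem I0_pos (x : ℝ) : 0 < I0 x := one_pos.trans_le (one_le_I0 x)

theorem hasDerivAt_integral_exp_mul_cos_mul {w : ℝ → ℝ} (hw : Continuous w) (a b x : ℝ) :
    HasDerivAt (fun y => ∫ t in a..b, exp (y * cos t) * w t)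
      (∫ t in a..b, exp (x * cos t) * cos t * w t) x := by
  refine (intervalIntegral.hasDerivAt_integral_of_dominated_loc_of_deriv_le
    (F' := fun y t => exp (y * cos t) * cos t * w t)
    (bound := fun t => exp (|x| + 1) * |w t|) (Metric.ball_mem_nhds x one_pos)
    (.of_forall fun y => (Continuous.aestronglyMeasurable (by fun_prop)))
    (Continuous.intervalIntegrable (by fun_prop) _ _)
    (Continuous.aestronglyMeasurable (by fun_prop)) ?_
    (Continuous.intervalIntegrable (by fun_prop) _ _) ?_).2
  · refine .of_forall fun t _ y hy => ?_
    have hy : |y| ≤ |x| + 1 := by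
      have := abs_sub_abs_le_abs_sub y x
      rw [Metric.mem_ball, dist_eq] at hy
      linarith
    have hexp : y * cos t ≤ |x| + 1 := calc
      y * cos t ≤ |y| * |cos t| := (le_abs_self _).trans (abs_mul _ _).le
      _ ≤ |y| * 1 := by gcongr; exact abs_cos_le_one t
      _ ≤ |x| + 1 := by linarith
    rw [norm_mul, norm_mul, norm_eq_abs, norm_eq_abs, norm_eq_abs, abs_exp]
    calc exp (y * cos t) * |cos t| * |w t| ≤ exp (|x| + 1) * 1 * |w t| := by
          gcongr; exact abs_cos_le_one t
      _ = _ := by ring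
  · refine .of_forall fun t _ y _ => ?_
    simpa [mul_comm] using ((hasDerivAt_id y).mul_const (cos t)).exp.mul_const (w t)

theorem mul_integral_exp_mul_cos_mul_cos (x : ℝ) :
    x * ∫ t in (0:ℝ)..π, exp (x * cos t) * cos t * cos t =
      x * (∫ t in (0:ℝ)..π, exp (x * cos t)) - ∫ t in (0:ℝ)..π, exp (x * cos t) * cos t := by
  have hderiv : ∀ t ∈ Set.uIcc (0:ℝ) π, HasDerivAt (fun u => exp (x * cos u) * sin u)
      (exp (x * cos t) * cos t - x * exp (x * cos t) + x * (exp (x * cos t) * cos t * cos t))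
      t := fun t _ => by
    refine ((((hasDerivAt_cos t).const_mul x).exp).mul (hasDerivAt_sin t)).congr_deriv ?_
    linear_combination (-(x * exp (x * cos t))) * sin_sq t
  have h := intervalIntegral.integral_eq_sub_of_hasDerivAt hderiv
    (Continuous.intervalIntegrable (by fun_prop) _ _)
  rw [intervalIntegral.integral_add (Continuous.intervalIntegrable (by fun_prop) _ _)
      (Continuous.intervalIntegrable (by fun_prop) _ _),
    intervalIntegral.integral_sub (Continuous.intervalIntegrable (by fun_prop) _ _)
      (Continuous.intervalIntegrable (by fun_prop) _ _),
    intervalIntegral.integral_const_mul, intervalIntegral.integral_const_mul] at h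
  simp only [sin_pi, sin_zero, mul_zero, sub_zero] at h
  linarith

theorem hasDerivAt_I0 (x : ℝ) : HasDerivAt I0 (I1 x) x := by
  have h := (hasDerivAt_integral_exp_mul_cos_mul (w := fun _ => 1) continuous_const 0 π x).const_mul
    (1 / π)
  simp only [mul_one] at h
  exact h

theorem hasDerivAt_I1 {x : ℝ} (hx : x ≠ 0) : HasDerivAt I1 (I0 x - I1 x / x) x := by
  refine ((hasDerivAt_integral_exp_mul_cos_mul continuous_cos 0 π x).const_mul
    (1 / π)).congr_deriv ?_
  have hJ : ∫ t in (0:ℝ)..π, exp (x * cos t) * cos t * cos t =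
      (∫ t in (0:ℝ)..π, exp (x * cos t)) - (∫ t in (0:ℝ)..π, exp (x * cos t) * cos t) / x := by
    apply mul_left_cancel₀ hx
    rw [mul_integral_exp_mul_cos_mul_cos, mul_sub, mul_div_cancel₀ _ hx]
  rw [hJ, I0, I1]
  ring

theorem hasDerivAt_I1_div_I0 {x : ℝ} (hx : x ≠ 0) :
    HasDerivAt (fun y => I1 y / I0 y) (1 - I1 x / I0 x / x - (I1 x / I0 x) ^ 2) x := by
  refine ((hasDerivAt_I1 hx).div (hasDerivAt_I0 x) (I0_pos x).ne').congr_deriv ?_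
  have := (I0_pos x).ne'
  field_simp

theorem strictAntiOn_inv_sub_self : StrictAntiOn (fun x : ℝ => x⁻¹ - x) (Set.Ioi 0) :=
  fun x hx y _ hxy => by
    have := (inv_lt_inv₀ (hx.trans hxy) hx).2 hxy
    dsimp only
    linarith

/-- The positive root of `z * x ^ 2 + c * x - z`, i.e. the solution `x > 0` of `x⁻¹ - x = c / z`. -/
def posRoot (c z : ℝ) : ℝ := 2 * z / (√(c ^ 2 + 4 * z ^ 2) + c)

section posRoot

variable {c z : ℝ}

theorem posRoot_pos (hc : 0 < c) (hz : 0 < z) : 0 < posRoot c z := by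
  unfold posRoot; positivity

theorem inv_posRoot_sub_posRoot (hc : 0 < c) (hz : 0 < z) :
    (posRoot c z)⁻¹ - posRoot c z = c / z := by
  have hs := sq_sqrt (by positivity : 0 ≤ c ^ 2 + 4 * z ^ 2)
  rw [posRoot]
  set s := √(c ^ 2 + 4 * z ^ 2)
  have : 0 < s + c := by positivity
  field_simp
  linear_combination hs

theorem div_le_inv_sub_self_iff (hc : 0 < c) (hz : 0 < z) {r : ℝ} (hr : 0 < r) :
    c / z ≤ r⁻¹ - r ↔ r ≤ posRoot c z := by
  rw [← inv_posRoot_sub_posRoot hc hz]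
  exact strictAntiOn_inv_sub_self.le_iff_ge (posRoot_pos hc hz) hr

theorem inv_sub_self_le_div_iff (hc : 0 < c) (hz : 0 < z) {r : ℝ} (hr : 0 < r) :
    r⁻¹ - r ≤ c / z ↔ posRoot c z ≤ r := by
  rw [← inv_posRoot_sub_posRoot hc hz]
  exact strictAntiOn_inv_sub_self.le_iff_ge hr (posRoot_pos hc hz)

theorem hasDerivAt_posRoot (hc : 0 < c) (z : ℝ) :
    HasDerivAt (posRoot c)
      (2 * c / (√(c ^ 2 + 4 * z ^ 2) * (√(c ^ 2 + 4 * z ^ 2) + c))) z := by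
  have hpos : 0 < c ^ 2 + 4 * z ^ 2 := by positivity
  have hs := sq_sqrt hpos.le
  have hq : HasDerivAt (fun y => c ^ 2 + 4 * y ^ 2) (8 * z) z :=
    (((hasDerivAt_pow 2 z).const_mul 4).const_add (c ^ 2)).congr_deriv (by norm_num; ring)
  have hden := (hq.sqrt hpos.ne').add_const c
  have : 0 < √(c ^ 2 + 4 * z ^ 2) := sqrt_pos.2 hpos
  refine (((hasDerivAt_id' z).const_mul 2).div hden (by positivity)).congr_deriv ?_
  set s := √(c ^ 2 + 4 * z ^ 2)
  field_simp
  linear_combination 2 * hs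

theorem riccati_sub_deriv_posRoot (hc : 0 < c) (hz : z ≠ 0) :
    1 - posRoot c z / z - posRoot c z ^ 2 -
        2 * c / (√(c ^ 2 + 4 * z ^ 2) * (√(c ^ 2 + 4 * z ^ 2) + c)) =
      2 * ((c - 1) * √(c ^ 2 + 4 * z ^ 2) - c) /
        (√(c ^ 2 + 4 * z ^ 2) * (√(c ^ 2 + 4 * z ^ 2) + c)) := by
  have hpos : 0 < c ^ 2 + 4 * z ^ 2 := by positivity
  have hs := sq_sqrt hpos.le
  have : 0 < √(c ^ 2 + 4 * z ^ 2) := sqrt_pos.2 hpos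
  rw [posRoot]
  set s := √(c ^ 2 + 4 * z ^ 2)
  field_simp
  linear_combination s * hs

end posRoot

theorem image_le_of_deriv_lt_deriv_boundary_Ici {f g f' g' : ℝ → ℝ} {a : ℝ}
    (hf : ∀ x, a ≤ x → HasDerivAt f (f' x) x) (hg : ∀ x, a ≤ x → HasDerivAt g (g' x) x)
    (ha : f a ≤ g a) (hlt : ∀ x, a ≤ x → f x = g x → f' x < g' x) {x : ℝ} (hx : a ≤ x) :
    f x ≤ g x :=
  image_le_of_deriv_right_lt_deriv_boundary'
    (fun y hy => (hf y hy.1).continuousAt.continuousWithinAt)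
    (fun y hy => (hf y hy.1).hasDerivWithinAt) ha
    (fun y hy => (hg y hy.1).continuousAt.continuousWithinAt)
    (fun y hy => (hg y hy.1).hasDerivWithinAt) (fun y hy => hlt y hy.1) ⟨hx, le_rfl⟩

theorem I1_div_I0_le_posRoot_one {a : ℝ} (ha : 0 < a) (hstart : I1 a / I0 a ≤ posRoot 1 a)
    {z : ℝ} (hz : a ≤ z) : I1 z / I0 z ≤ posRoot 1 z := by
  refine image_le_of_deriv_lt_deriv_boundary_Ici
    (fun x hx => hasDerivAt_I1_div_I0 (ha.trans_le hx).ne')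
    (fun x _ => hasDerivAt_posRoot one_pos x) hstart (fun x hx heq => ?_) hz
  have hdefect := riccati_sub_deriv_posRoot one_pos (ha.trans_le hx).ne'
  have hneg : 2 * ((1 - 1) * √(1 ^ 2 + 4 * x ^ 2) - 1) /
      (√(1 ^ 2 + 4 * x ^ 2) * (√(1 ^ 2 + 4 * x ^ 2) + 1)) < 0 :=
    div_neg_of_neg_of_pos (by norm_num) (by positivity)
  rw [heq]
  linarith

theorem posRoot_le_I1_div_I0 {a c : ℝ} (ha : 0 < a) (hc : 0 < c)
    (hsub : c < (c - 1) * √(c ^ 2 + 4 * a ^ 2)) (hstart : posRoot c a ≤ I1 a / I0 a)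
    {z : ℝ} (hz : a ≤ z) : posRoot c z ≤ I1 z / I0 z := by
  refine image_le_of_deriv_lt_deriv_boundary_Ici (fun x _ => hasDerivAt_posRoot hc x)
    (fun x hx => hasDerivAt_I1_div_I0 (ha.trans_le hx).ne') hstart (fun x hx heq => ?_) hz
  have hdefect := riccati_sub_deriv_posRoot hc (ha.trans_le hx).ne'
  have hsqrt : √(c ^ 2 + 4 * a ^ 2) ≤ √(c ^ 2 + 4 * x ^ 2) :=
    sqrt_le_sqrt (by nlinarith)
  have hc1 : 1 < c := by
    by_contra! h
    nlinarith [sqrt_nonneg (c ^ 2 + 4 * a ^ 2)]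
  have hpos : 0 < 2 * ((c - 1) * √(c ^ 2 + 4 * x ^ 2) - c) /
      (√(c ^ 2 + 4 * x ^ 2) * (√(c ^ 2 + 4 * x ^ 2) + c)) :=
    div_pos (by nlinarith) (by positivity)
  rw [← heq]
  linarith

theorem I1_div_I0_one_fifth_mem :
    9945 / 100000 < I1 (1 / 5) / I0 (1 / 5) ∧ I1 (1 / 5) / I0 (1 / 5) < 1 / 10 := by
  have h0 := abs_le.1 (abs_I0_sub_le (z := 1 / 5) (by norm_num [abs_of_pos]))
  have h1 := abs_le.1 (abs_I1_sub_le (z := 1 / 5) (by norm_num [abs_of_pos]))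
  norm_num at h0 h1
  rw [lt_div_iff₀ (I0_pos _), div_lt_iff₀ (I0_pos _)]
  constructor <;> linarith

theorem lt_sqrt_discr_one_fifth : 203 / 100 < √((399 / 200) ^ 2 + 4 * (1 / 5) ^ 2) :=
  lt_sqrt_of_sq_lt (by norm_num)

theorem one_div_ten_lt_posRoot_one : 1 / 10 < posRoot 1 (1 / 5) := by
  have : √(1 ^ 2 + 4 * (1 / 5 : ℝ) ^ 2) < 3 := (sqrt_lt' (by norm_num)).2 (by norm_num)
  rw [posRoot, lt_div_iff₀ (by positivity)]
  linarith

theorem posRoot_one_fifth_lt : posRoot (399 / 200) (1 / 5) < 9945 / 100000 := by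
  rw [posRoot, div_lt_iff₀ (by positivity)]
  linarith [lt_sqrt_discr_one_fifth]

theorem abs_I1_div_I0_sub_le {z : ℝ} (h0 : 0 < z) (h1 : z ≤ 1 / 5) :
    |I1 z / I0 z - z / 2| ≤ z ^ 2 / 8 := by
  have hz : |z| ≤ 1 := abs_le.2 ⟨by linarith, by linarith⟩
  have he0 := abs_le.1 (abs_I0_sub_le hz)
  have he1 := abs_le.1 (abs_I1_sub_le hz)
  have hI0 := one_le_I0 z
  rw [div_sub' (I0_pos z).ne', abs_div, abs_of_pos (I0_pos z), div_le_iff₀ (I0_pos z), abs_le]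
  have hp1 := mul_le_mul_of_nonneg_left he0.2 (show (0:ℝ) ≤ z / 2 by linarith)
  have hp2 := mul_le_mul_of_nonneg_left he0.1 (show (0:ℝ) ≤ z / 2 by linarith)
  constructor <;> nlinarith

theorem abs_I0_div_I1_sub_le {z : ℝ} (h0 : 0 < z) (h1 : z ≤ 1 / 5) :
    |I0 z / I1 z - 2 / z - z / 4| ≤ z ^ 2 / 8 := by
  have hz : |z| ≤ 1 := abs_le.2 ⟨by linarith, by linarith⟩
  have he0 := abs_le.1 (abs_I0_sub_le hz)
  have he1 := abs_le.1 (abs_I1_sub_le hz)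
  have hI1 : 0 < I1 z := by nlinarith
  have heq : I0 z / I1 z - 2 / z - z / 4 =
      (4 * z * I0 z - 8 * I1 z - z ^ 2 * I1 z) / (4 * z * I1 z) := by
    field_simp
    ring
  rw [heq, abs_div, abs_of_pos (by positivity : (0:ℝ) < 4 * z * I1 z),
    div_le_iff₀ (by positivity : (0:ℝ) < 4 * z * I1 z), abs_le]
  have hp1 := mul_le_mul_of_nonneg_left he0.2 (show (0:ℝ) ≤ 4 * z by linarith)
  have hp2 := mul_le_mul_of_nonneg_left he0.1 (show (0:ℝ) ≤ 4 * z by linarith)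
  have hp3 := mul_le_mul_of_nonneg_left he1.2 (show (0:ℝ) ≤ z ^ 2 by positivity)
  have hp4 := mul_le_mul_of_nonneg_left he1.1 (show (0:ℝ) ≤ z ^ 2 by positivity)
  constructor <;> nlinarith

theorem stmt5 :
    ∃ δ ∈ Set.Ioo (0:ℝ) (1/4), ∃ c : ℝ, c < 2 ∧
      (∀ z : ℝ, 0 < z → z ≤ δ →
        |I1 z / I0 z - z / 2| ≤ z ^ 2 / 8 ∧
          |I0 z / I1 z - 2 / z - z / 4| ≤ z ^ 2 / 8) ∧
      ∀ z : ℝ, δ ≤ z →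
        1 / z ≤ I0 z / I1 z - I1 z / I0 z ∧ I0 z / I1 z - I1 z / I0 z ≤ c / z := by
  refine ⟨1 / 5, ⟨by norm_num, by norm_num⟩, 399 / 200, by norm_num,
    fun z hz0 hz => ⟨abs_I1_div_I0_sub_le hz0 hz, abs_I0_div_I1_sub_le hz0 hz⟩, fun z hz => ?_⟩
  have hz0 : 0 < z := by linarith
  have hlower := posRoot_le_I1_div_I0 (by norm_num) (by norm_num)
    (by linarith [lt_sqrt_discr_one_fifth])
    (posRoot_one_fifth_lt.le.trans I1_div_I0_one_fifth_mem.1.le) hz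
  have hupper := I1_div_I0_le_posRoot_one (by norm_num)
    (I1_div_I0_one_fifth_mem.2.trans one_div_ten_lt_posRoot_one).le hz
  have hr : 0 < I1 z / I0 z := (posRoot_pos (by norm_num) hz0).trans_le hlower
  rw [← inv_div (I1 z) (I0 z)]
  exact ⟨(div_le_inv_sub_self_iff one_pos hz0 hr).2 hupper,
    (inv_sub_self_le_div_iff (by norm_num) hz0 hr).2 hlower⟩
end
end
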